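/- Let L' be a reduced language containing a word aγaδ (a ∈ Σ, γ, δ ∈ Σ*) and containing some infix of γaγ. Then L' contains a word of the form γ₁aγ₂ where γ₁ is a nonempty suffix of γ and γ₂ is a nonempty prefix of γ. -/

import Mathlib

def StrictInfix {A : Type*} (u w : List A) : Prop :=
  ∃ s t : List A, w = s ++ u ++ t ∧ s ++ t ≠ []

def Reduced {A : Type*} (L : Set (List A)) : Prop :=
  ∀ w ∈ L, ∀ u, StrictInfix u w → u ∉ L

/- An infix of `γ a γ` that lies in `L'` can lie neither inside `γ a` nor inside `a γ`, since both
are strict infixes of `a γ a δ ∈ L'`. So it straddles the middle `a` and reaches into both copies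
of `γ`: it is a nonempty suffix of `γ`, then `a`, then a nonempty prefix of `γ`. -/

namespace List

variable {A : Type*}

theorem infix_append_singleton_append {u xs ys : List A} {a : A}
    (h : u <:+: xs ++ [a] ++ ys) :
    u <:+: xs ++ [a] ∨ u <:+: [a] ++ ys ∨
      ∃ x y, x ≠ [] ∧ y ≠ [] ∧ x <:+ xs ∧ y <+: ys ∧ u = x ++ [a] ++ y := by
  rcases infix_append_iff_ne_nil.mp h with h | h | ⟨l₁, y, hl₁, hy, rfl, hsuf, hpre⟩
  · exact .inl h
  · exact .inr (.inl (h.trans infix_append_right))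
  · obtain ⟨x, rfl, hx⟩ := (suffix_concat_iff.mp hsuf).resolve_left hl₁
    rcases eq_or_ne x [] with rfl | hx₀
    · exact .inr (.inl (by simpa using ((prefix_append_right_inj [a]).mpr hpre).isInfix))
    · exact .inr (.inr ⟨x, y, hx₀, hy, hx, hpre, rfl⟩)

end List

theorem StrictInfix.of_isInfix {A : Type*} {u v w : List A} (huv : u <:+: v)
    (hvw : StrictInfix v w) : StrictInfix u w := by
  obtain ⟨s, t, rfl⟩ := huv
  obtain ⟨s', t', rfl, hne⟩ := hvw
  exact ⟨s' ++ s, t ++ t', by simp, by simp_all⟩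

theorem Reduced.not_mem_of_isInfix {A : Type*} {L : Set (List A)} (hL : Reduced L)
    {u v w : List A} (hw : w ∈ L) (hvw : StrictInfix v w) (huv : u <:+: v) : u ∉ L :=
  hL w hw u (hvw.of_isInfix huv)

theorem infix_of_gag {A : Type*} (L' : Set (List A)) (hred : Reduced L')
    (a : A) (γ δ : List A)
    (hmem : [a] ++ γ ++ [a] ++ δ ∈ L')
    (hinf : ∃ u : List A, u <:+: (γ ++ [a] ++ γ) ∧ u ∈ L') :
    ∃ γ₁ γ₂ : List A, γ₁ ≠ [] ∧ γ₂ ≠ [] ∧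
      γ₁ <:+ γ ∧ γ₂ <+: γ ∧ γ₁ ++ [a] ++ γ₂ ∈ L' := by
  obtain ⟨u, hu, huL⟩ := hinf
  rcases List.infix_append_singleton_append hu with h | h | ⟨γ₁, γ₂, h₁, h₂, hγ₁, hγ₂, rfl⟩
  · exact absurd huL (hred.not_mem_of_isInfix hmem ⟨[a], δ, by simp, by simp⟩ h)
  · exact absurd huL (hred.not_mem_of_isInfix hmem ⟨[], [a] ++ δ, by simp, by simp⟩ h)
  · exact ⟨γ₁, γ₂, h₁, h₂, hγ₁, hγ₂, huL⟩
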